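/- arXiv:2502.07606 — 5 statements merged into one kernel-verified Lean document; each statement's English description precedes it below -/
import Mathlib

section
/- The n-player trading game with only temporary impact cost is an exact potential game with potential function φ(a) = Σ_{t=1}^T Σ_{i=1}^n a_i'(t) Σ_{j≥i} a_j'(t). That is, for any player k, any strategies a_1,...,a_n and any deviation b_k of player k, φ(b_k, a_{-k}) - φ(a_k, a_{-k}) = c^temp(b_k, a_{-k}) - c^temp(a_k, a_{-k}). -/
private lemma aux_temp (n : ℕ) (k : Fin n) (f g : Fin n → ℤ) (h : ∀ i, i ≠ k → f i = g i) :
    (∑ i : Fin n, f i * ∑ j ∈ Finset.univ.filter (fun j : Fin n => i ≤ j), f j)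
      - (∑ i : Fin n, g i * ∑ j ∈ Finset.univ.filter (fun j : Fin n => i ≤ j), g j)
    = f k * ∑ j : Fin n, f j - g k * ∑ j : Fin n, g j := by
  obtain ⟨c, hc⟩ : ∃ c, f k - g k = c := ⟨_, rfl⟩
  have hd : ∀ j : Fin n, f j - g j = if j = k then c else 0 := by
    intro j; by_cases hj : j = k
    · subst hj; simpa using hc
    · simp [hj, h j hj]
  have hAB : ∀ i : Fin n,
      (∑ j ∈ Finset.univ.filter (fun j : Fin n => i ≤ j), f j)
        - (∑ j ∈ Finset.univ.filter (fun j : Fin n => i ≤ j), g j)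
      = if i ≤ k then c else 0 := by
    intro i
    rw [← Finset.sum_sub_distrib]
    simp_rw [hd]
    rw [Finset.sum_ite_eq']
    simp
  have hAk : (∑ j ∈ Finset.univ.filter (fun j : Fin n => k ≤ j), f j)
      = (∑ j ∈ Finset.univ.filter (fun j : Fin n => k ≤ j), g j) + c := by
    have := hAB k; simp at this; omega
  have hS : (∑ j : Fin n, f j) = (∑ j : Fin n, g j) + c := by
    have : (∑ j : Fin n, f j) - (∑ j : Fin n, g j) = c := by
      rw [← Finset.sum_sub_distrib]; simp_rw [hd]; rw [Finset.sum_ite_eq']; simp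
    omega
  rw [← Finset.sum_sub_distrib, ← Finset.add_sum_erase _ _ (Finset.mem_univ k)]
  have herase : (∑ i ∈ Finset.univ.erase k,
        (f i * (∑ j ∈ Finset.univ.filter (fun j : Fin n => i ≤ j), f j)
          - g i * (∑ j ∈ Finset.univ.filter (fun j : Fin n => i ≤ j), g j)))
      = c * ∑ i ∈ Finset.univ.filter (fun i : Fin n => i < k), g i := by
    rw [Finset.mul_sum]
    rw [show (Finset.univ.filter (fun i : Fin n => i < k))
        = (Finset.univ.erase k).filter (fun i : Fin n => i ≤ k) by
      ext i; simp [Finset.mem_filter, Finset.mem_erase, lt_iff_le_and_ne, and_comm]]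
    rw [Finset.sum_filter]
    apply Finset.sum_congr rfl
    intro i hi
    have hik : i ≠ k := (Finset.mem_erase.mp hi).1
    rw [h i hik]
    have : g i * (∑ j ∈ Finset.univ.filter (fun j : Fin n => i ≤ j), f j)
        - g i * (∑ j ∈ Finset.univ.filter (fun j : Fin n => i ≤ j), g j)
        = g i * ((∑ j ∈ Finset.univ.filter (fun j : Fin n => i ≤ j), f j)
          - (∑ j ∈ Finset.univ.filter (fun j : Fin n => i ≤ j), g j)) := by ring
    rw [this, hAB i]
    by_cases hle : i ≤ k <;> simp [hle] <;> ring
  rw [herase, hAk, hS]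
  have hsplit : (∑ j : Fin n, g j)
      = (∑ j ∈ Finset.univ.filter (fun j : Fin n => k ≤ j), g j)
        + ∑ i ∈ Finset.univ.filter (fun i : Fin n => i < k), g i := by
    rw [← Finset.sum_filter_add_sum_filter_not Finset.univ (fun j : Fin n => k ≤ j) g]
    congr 1
    apply Finset.sum_congr _ (fun _ _ => rfl)
    ext j; simp [not_le]
  rw [hsplit, ← hc]; ring

/-- The temporary-impact-only trading game is an exact potential game with potential
    `φ(a) = Σ_{t=1}^T Σ_i a_i'(t) Σ_{j ≥ i} a_j'(t)`: for any player `k` and deviation `b`,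
    the change in potential equals the change in `k`'s temporary impact cost. -/
theorem temp_impact_potential_game (n T : ℕ) (a : Fin n → ℕ → ℤ) (k : Fin n) (b : ℕ → ℤ) :
    (let d : (Fin n → ℕ → ℤ) → Fin n → ℕ → ℤ := fun s i t => s i t - s i (t - 1)
     let φ : (Fin n → ℕ → ℤ) → ℤ := fun s =>
       ∑ t ∈ Finset.Icc 1 T, ∑ i : Fin n,
         d s i t * ∑ j ∈ Finset.univ.filter (fun j : Fin n => i ≤ j), d s j t
     let ctemp : (Fin n → ℕ → ℤ) → Fin n → ℤ := fun s i =>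
       ∑ t ∈ Finset.Icc 1 T, d s i t * ∑ j : Fin n, d s j t
     φ (Function.update a k b) - φ a
       = ctemp (Function.update a k b) k - ctemp a k) := by
  simp only []
  rw [← Finset.sum_sub_distrib, ← Finset.sum_sub_distrib]
  apply Finset.sum_congr rfl
  intro t _
  exact aux_temp n k _ _ (fun i hi => by simp [Function.update_of_ne hi])
end

section
/- In the two-player trading game with κ = 2 (total cost c(a_i, a_{-i}) = c^temp + 2·c^perm), the sum of the two players' costs is constant: c(a_1, a_2) + c(a_2, a_1) = (V_1 + V_2)^2 for all strategy pairs. -/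
lemma telescope_Icc (f : ℕ → ℤ) (T : ℕ) :
    ∑ t ∈ Finset.Icc 1 T, (f t - f (t - 1)) = f T - f 0 := by
  induction T with
  | zero => simp
  | succ n ih =>
    rw [Finset.sum_Icc_succ_top (by omega), ih]
    simp

/-- In the two-player trading game with κ = 2, the sum of the two players' costs is
    the constant `(V₁ + V₂)²`. -/
theorem two_player_kappa_two_constant_sum (T : ℕ) (a₁ a₂ : ℕ → ℤ) (V₁ V₂ : ℤ)
    (h10 : a₁ 0 = 0) (h20 : a₂ 0 = 0) (h1T : a₁ T = V₁) (h2T : a₂ T = V₂) :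
    (let d : (ℕ → ℤ) → ℕ → ℤ := fun a t => a t - a (t - 1)
     let c : (ℕ → ℤ) → ℤ := fun x =>
       ∑ t ∈ Finset.Icc 1 T,
         (d x t * (d a₁ t + d a₂ t) + 2 * d x t * (a₁ (t - 1) + a₂ (t - 1)))
     c a₁ + c a₂ = (V₁ + V₂) ^ 2) := by
  intro d c
  have key : c a₁ + c a₂ = (a₁ T + a₂ T) ^ 2 - (a₁ 0 + a₂ 0) ^ 2 := by
    have := telescope_Icc (fun t => (a₁ t + a₂ t) ^ 2) T
    simp only [c, d, ← Finset.sum_add_distrib]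
    rw [← this]
    apply Finset.sum_congr rfl
    intro t _
    ring
  rw [key, h10, h20, h1T, h2T]
  ring
end

section
/- In the two-player trading game with permanent impact cost only, if both players buy all V shares at time t=1, the sum of permanent impact costs is 0; if both players buy V/T shares at each time step, the sum of permanent impact costs is 2V² − 2V²/T. Hence the permanent-impact-only game is not constant-sum (for T ≥ 2, V ≠ 0). -/
lemma sum_icc_sub_one (T : ℕ) : ∑ t ∈ Finset.Icc 1 T, ((t : ℝ) - 1) = T * (T - 1) / 2 := by
  induction T with
  | zero => simp
  | succ n ih =>
    rw [Finset.sum_Icc_succ_top (Nat.one_le_iff_ne_zero.mpr (Nat.succ_ne_zero n)), ih]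
    push_cast
    ring

/-- In the two-player permanent-impact-only trading game: if both players buy all `V`
    shares at time 1 the sum of permanent impact costs is 0; if both buy `V/T` shares at
    each step the sum is `2V² − 2V²/T`.  Hence for `T ≥ 2`, `V ≠ 0` the game is not
    constant-sum. -/
theorem perm_impact_not_constant_sum (T : ℕ) (hT : 2 ≤ T) (V : ℝ) (hV : V ≠ 0) :
    (let upfront : ℕ → ℝ := fun t => if t = 0 then 0 else V
     let uniform : ℕ → ℝ := fun t => V * t / T
     -- sum over both players of c^perm when both play strategy `a`
     let sumPerm : (ℕ → ℝ) → ℝ := fun a =>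
       2 * ∑ t ∈ Finset.Icc 1 T, (a t - a (t - 1)) * (a (t - 1) + a (t - 1))
     sumPerm upfront = 0 ∧
     sumPerm uniform = 2 * V ^ 2 - 2 * V ^ 2 / T ∧
     sumPerm upfront ≠ sumPerm uniform) := by
  have hT0 : (T : ℝ) ≠ 0 := by positivity
  intro upfront uniform sumPerm
  have h1 : sumPerm upfront = 0 := by
    simp only [sumPerm]
    rw [Finset.sum_eq_zero, mul_zero]
    intro t ht
    simp only [Finset.mem_Icc] at ht
    rcases eq_or_lt_of_le ht.1 with h | h
    · simp [upfront, ← h]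
    · have h1' : t ≠ 0 := by omega
      have h2' : t - 1 ≠ 0 := by omega
      simp [upfront, h1', h2']
  have h2 : sumPerm uniform = 2 * V ^ 2 - 2 * V ^ 2 / T := by
    simp only [sumPerm]
    have : ∀ t ∈ Finset.Icc 1 T,
        (uniform t - uniform (t - 1)) * (uniform (t - 1) + uniform (t - 1))
          = (2 * V ^ 2 / T ^ 2) * ((t : ℝ) - 1) := by
      intro t ht
      simp only [Finset.mem_Icc] at ht
      have hc : ((t - 1 : ℕ) : ℝ) = (t : ℝ) - 1 := by
        have := ht.1; push_cast [Nat.cast_sub this]; ring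
      simp only [uniform, hc]
      field_simp
      ring
    rw [Finset.sum_congr rfl this, ← Finset.mul_sum, sum_icc_sub_one]
    have hT1 : (2:ℝ) ≤ (T:ℝ) := by exact_mod_cast hT
    field_simp
  refine ⟨h1, h2, ?_⟩
  rw [h1, h2]
  intro h
  have : 2 * V ^ 2 / T = 2 * V ^ 2 := by linarith
  have hV2 : (0:ℝ) < 2 * V ^ 2 := by positivity
  rw [div_eq_iff hT0] at this
  have hTgt : (1:ℝ) < (T:ℝ) := by exact_mod_cast (by omega : 1 < T)
  nlinarith
end

section
/- Linearization of trading cost: for any player i, there exist maps f : A_i → ℝ^{2T} and h : A_{-i} → ℝ^{2T} such that ⟨f(a_i), h(a_{-i})⟩ = c(a_i, a_{-i}) for all a_i and a_{-i}. Concretely, with f(a_i)_t = a_i'(t) and f(a_i)_{T+t} = a_i'(t)(a_i'(t) + κ a_i(t−1)), and h(a_{-i})_t = Σ_{j≠i}(a_j'(t) + κ a_j(t−1)) and h(a_{-i})_{T+t} = 1, the inner product equals the trading cost. -/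
open Finset

/- The last `T` coordinates of `f(a_i)` pair with the constant `1` in `h(a_{-i})` and supply
exactly the own-player term `a_i'(t) (a_i'(t) + κ a_i(t-1))` missing from the first `T`
coordinates, where `h` sums over the other players only; adding it completes both sums over
all players. -/

theorem sum_Icc_one_add {M : Type*} [AddCommMonoid M] (g : ℕ → M) (m n : ℕ) :
    ∑ k ∈ Icc 1 (m + n), g k = ∑ k ∈ Icc 1 m, g k + ∑ k ∈ Icc 1 n, g (k + m) := by
  have hIcc (b : ℕ) : Icc 1 b = Ioc 0 b := Icc_add_one_left_eq_Ioc 0 b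
  have hshift : Ioc m (m + n) = (Ioc 0 n).map (addRightEmbedding m) := by
    rw [map_add_right_Ioc, zero_add, add_comm]
  rw [hIcc, hIcc, hIcc, ← sum_Ioc_consecutive g (Nat.zero_le m) (Nat.le_add_right m n), hshift,
    sum_map]
  rfl

theorem mul_sum_erase_add_mul_self {ι R : Type*} [Fintype ι] [DecidableEq ι] [CommRing R]
    (u v : ι → R) (κ : R) (i : ι) :
    u i * ∑ j ∈ univ.erase i, (u j + κ * v j) + u i * (u i + κ * v i)
      = u i * ∑ j, u j + κ * u i * ∑ j, v j := by
  rw [← mul_add, sum_erase_add _ _ (mem_univ i), sum_add_distrib, ← mul_sum]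
  ring

/-- Linearization of the trading cost: with the learner vector `f(a_i) ∈ ℝ^{2T}` given by
    `f_t = a_i'(t)`, `f_{T+t} = a_i'(t)(a_i'(t) + κ a_i(t−1))` and adversary vector
    `h_t = Σ_{j≠i}(a_j'(t) + κ a_j(t−1))`, `h_{T+t} = 1`, the standard inner product
    `⟨f(a_i), h(a_{-i})⟩` equals the trading cost `c(a_i, a_{-i})`. -/
theorem linearized_cost (n T : ℕ) (κ : ℝ) (a : Fin n → ℕ → ℝ) (i : Fin n) :
    (let d : Fin n → ℕ → ℝ := fun j t => a j t - a j (t - 1)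
     let f : ℕ → ℝ := fun k =>
       if k ≤ T then d i k
       else d i (k - T) * (d i (k - T) + κ * a i (k - T - 1))
     let h : ℕ → ℝ := fun k =>
       if k ≤ T then ∑ j ∈ Finset.univ.erase i, (d j k + κ * a j (k - 1))
       else 1
     ∑ k ∈ Finset.Icc 1 (2 * T), f k * h k
       = ∑ t ∈ Finset.Icc 1 T,
           (d i t * (∑ j : Fin n, d j t) + κ * d i t * ∑ j : Fin n, a j (t - 1))) := by
  intro d f h
  rw [two_mul, sum_Icc_one_add, ← sum_add_distrib]
  refine sum_congr rfl fun t ht => ?_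
  have htT : t ≤ T := (mem_Icc.mp ht).2
  have hshift : ¬ t + T ≤ T := by have := (mem_Icc.mp ht).1; omega
  simp only [f, h, if_pos htT, if_neg hshift, Nat.add_sub_cancel, mul_one]
  exact mul_sum_erase_add_mul_self (fun j => d j t) (fun j => a j (t - 1)) κ i
end

section
/- Any finite n-player cost game decomposes as the sum of a potential game and a zero-sum game: given costs c_1,...,c_n, define c_{i,1} = (Σ_{j=1}^n c_j)/n and c_{i,2} = ((n−1)c_i − Σ_{j≠i} c_j)/n. Then c_i = c_{i,1} + c_{i,2} for every i; the game with costs (c_{i,1}) is an exact potential game; and the game with costs (c_{i,2}) satisfies Σ_{i=1}^n c_{i,2}(a) = 0 for every profile a. -/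
/-- Any finite n-player cost game decomposes as the sum of a potential game and a
    zero-sum game: with `c_{i,1} = (Σ_j c_j)/n` and
    `c_{i,2} = ((n−1)c_i − Σ_{j≠i} c_j)/n`, we have `c_i = c_{i,1} + c_{i,2}`; the game
    `(c_{i,1})` is an exact potential game (the common cost is a potential); and
    `Σ_i c_{i,2}(a) = 0` for every profile `a`. -/
theorem potential_zero_sum_decomposition
    {ι : Type*} [Fintype ι] [DecidableEq ι] [Nonempty ι]
    (A : ι → Type*) [∀ i, Fintype (A i)]
    (c : ∀ _ : ι, (∀ j, A j) → ℝ) :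
    (let n : ℝ := Fintype.card ι
     let c1 : ι → (∀ j, A j) → ℝ := fun _ a => (∑ j : ι, c j a) / n
     let c2 : ι → (∀ j, A j) → ℝ := fun i a =>
       ((n - 1) * c i a - ∑ j ∈ Finset.univ.erase i, c j a) / n
     (∀ (i : ι) (a : ∀ j, A j), c i a = c1 i a + c2 i a) ∧
     (∃ φ : (∀ j, A j) → ℝ, ∀ (i : ι) (a : ∀ j, A j) (b : A i),
        φ (Function.update a i b) - φ a
          = c1 i (Function.update a i b) - c1 i a) ∧
     (∀ a : ∀ j, A j, ∑ i : ι, c2 i a = 0)) := by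
  intro n c1 c2
  have hn : n ≠ 0 := by
    have : 0 < Fintype.card ι := Fintype.card_pos
    simp only [n]
    exact_mod_cast this.ne'
  have herase : ∀ (i : ι) (a : ∀ j, A j),
      ∑ j ∈ Finset.univ.erase i, c j a = (∑ j : ι, c j a) - c i a := by
    intro i a
    rw [eq_sub_iff_add_eq, Finset.sum_erase_add _ _ (Finset.mem_univ i)]
  refine ⟨?_, ⟨fun a => (∑ j : ι, c j a) / n, fun i a b => rfl⟩, ?_⟩
  · intro i a
    simp only [c1, c2, herase]
    field_simp
    ring
  · intro a
    simp only [c2, herase]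
    rw [← Finset.sum_div, Finset.sum_sub_distrib, Finset.sum_sub_distrib]
    simp [Finset.sum_const, Finset.card_univ, ← Finset.sum_mul, mul_comm, sub_mul, n]
end
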